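/- arXiv:0711.1384 — 4 statements merged into one kernel-verified Lean document; each statement's English description precedes it below -/
import Mathlib

section
/- If q is a positive function on (0,1], nondecreasing near zero, and the integral I(q,c) = ∫₀¹ t⁻¹ exp(−c q²(t)/t) dt is finite for some c > 0, then lim_{t↓0} t^{1/2}/q(t) = 0. -/
/-!
On `(t/2, t]` monotonicity of `q` gives `q(s)²/s ≤ 2 q(t)²/t`, so the integrand of `I(q,c)`
is at least `t⁻¹ exp(-2c q(t)²/t)` there, and the integral over `(t/2, t]` is at least
`exp(-2c q(t)²/t) / 2`. These integrals tend to `0` as `t ↓ 0` by absolute continuity of the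
integral, hence `q(t)²/t → ∞`, which is the claim.
-/

open MeasureTheory Filter Set

/-- `q` belongs to the class `Q`: positive on `(0,1]` with
`inf_{δ ≤ t ≤ 1} q(t) > 0` for every `0 < δ < 1`, and nondecreasing near zero. -/
def MemQ (q : ℝ → ℝ) : Prop :=
  (∀ t ∈ Set.Ioc (0:ℝ) 1, 0 < q t) ∧
  (∀ δ ∈ Set.Ioo (0:ℝ) 1, 0 < sInf (q '' Set.Icc δ 1)) ∧
  ∃ δ > (0:ℝ), MonotoneOn q (Set.Ioc 0 δ)

/-- `I(q,c) = ∫₀¹ t⁻¹ exp(−c q²(t)/t) dt` is finite. -/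
def IFin (q : ℝ → ℝ) (c : ℝ) : Prop :=
  MeasureTheory.IntegrableOn (fun t => t⁻¹ * Real.exp (-c * (q t)^2 / t)) (Set.Ioc (0:ℝ) 1)

open Real Topology

lemma tendsto_setIntegral_Ioc_half_nhdsGT_zero {f : ℝ → ℝ} {a : ℝ} (ha : 0 < a)
    (hf : IntegrableOn f (Ioc 0 a)) :
    Tendsto (fun t => ∫ x in Ioc (t / 2) t, f x) (𝓝[>] 0) (𝓝 0) := by
  have hvol :
      Tendsto (fun t : ℝ => volume.restrict (Ioc 0 a) (Ioc (t / 2) t)) (𝓝[>] 0) (𝓝 0) := by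
    refine tendsto_of_tendsto_of_tendsto_of_le_of_le tendsto_const_nhds ?_ (fun _ => zero_le)
      (fun t => Measure.restrict_apply_le _ _)
    have : Tendsto (fun t : ℝ => ENNReal.ofReal (t - t / 2)) (𝓝[>] 0) (𝓝 0) := by
      rw [← ENNReal.ofReal_zero]
      exact ENNReal.tendsto_ofReal (tendsto_nhdsWithin_of_tendsto_nhds
        ((by fun_prop : Continuous fun t : ℝ => t - t / 2).tendsto' 0 0 (by norm_num)))
    simpa only [Real.volume_Ioc] using this
  refine (hf.tendsto_setIntegral_nhds_zero hvol).congr' ?_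
  filter_upwards [Ioc_mem_nhdsGT ha] with t ht
  rw [Measure.restrict_restrict_of_subset (Ioc_subset_Ioc (half_pos ht.1).le ht.2)]

lemma inv_mul_exp_le_inv_mul_exp_of_mem_Ioc_half {q : ℝ → ℝ} {δ c t s : ℝ} (hc : 0 ≤ c)
    (hmono : MonotoneOn q (Ioc 0 δ)) (ht : t ≤ δ) (hs : s ∈ Ioc (t / 2) t) (hqs : 0 ≤ q s) :
    t⁻¹ * exp (-(2 * c * (q t ^ 2 / t))) ≤ s⁻¹ * exp (-c * q s ^ 2 / s) := by
  obtain ⟨hts, hst⟩ := hs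
  have ht0 : 0 < t / 2 := by linarith
  have hs0 : 0 < s := ht0.trans hts
  have hqst : q s ≤ q t := hmono ⟨hs0, hst.trans ht⟩ ⟨hs0.trans_le hst, ht⟩ hst
  have hexp : -(2 * c * (q t ^ 2 / t)) ≤ -c * q s ^ 2 / s := by
    rw [neg_mul, neg_div, neg_le_neg_iff]
    calc c * q s ^ 2 / s ≤ c * q t ^ 2 / (t / 2) := by gcongr
      _ = 2 * c * (q t ^ 2 / t) := by field_simp
  gcongr

lemma exp_le_two_mul_setIntegral_Ioc_half {q : ℝ → ℝ} {δ c t : ℝ} (hc : 0 ≤ c)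
    (hpos : ∀ s ∈ Ioc (0 : ℝ) 1, 0 < q s) (hmono : MonotoneOn q (Ioc 0 δ)) (hI : IFin q c)
    (ht : t ∈ Ioc 0 (min δ 1)) :
    exp (-(2 * c * (q t ^ 2 / t))) ≤
      2 * ∫ s in Ioc (t / 2) t, s⁻¹ * exp (-c * q s ^ 2 / s) := by
  obtain ⟨ht0, htδ1⟩ := ht
  have hsub : Ioc (t / 2) t ⊆ Ioc 0 1 :=
    Ioc_subset_Ioc (half_pos ht0).le (htδ1.trans (min_le_right _ _))
  have hbound := setIntegral_ge_of_const_le_real measurableSet_Ioc measure_Ioc_lt_top.ne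
    (fun s hs => inv_mul_exp_le_inv_mul_exp_of_mem_Ioc_half hc hmono
      (htδ1.trans (min_le_left _ _)) hs (hpos s (hsub hs)).le) (hI.mono_set hsub)
  rw [Real.volume_real_Ioc_of_le (half_le_self ht0.le)] at hbound
  calc exp (-(2 * c * (q t ^ 2 / t)))
      = 2 * (t⁻¹ * exp (-(2 * c * (q t ^ 2 / t))) * (t - t / 2)) := by field_simp; ring
    _ ≤ _ := by gcongr

theorem stmt0 (q : ℝ → ℝ) (hq : MemQ q) (h : ∃ c > (0:ℝ), IFin q c) :
    Tendsto (fun t => Real.sqrt t / q t) (nhdsWithin 0 (Set.Ioi 0)) (nhds 0) := by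
  obtain ⟨hpos, -, δ, hδ, hmono⟩ := hq
  obtain ⟨c, hc, hI⟩ := h
  have hδ1 : Ioc (0 : ℝ) (min δ 1) ∈ 𝓝[>] 0 := Ioc_mem_nhdsGT (lt_min hδ one_pos)
  have hexp : Tendsto (fun t => exp (-(2 * c * (q t ^ 2 / t)))) (𝓝[>] 0) (𝓝 0) :=
    squeeze_zero' (Eventually.of_forall fun _ => (exp_pos _).le)
      (eventually_of_mem hδ1 fun _ ht =>
        exp_le_two_mul_setIntegral_Ioc_half hc.le hpos hmono hI ht)
      (by simpa using (tendsto_setIntegral_Ioc_half_nhdsGT_zero one_pos hI).const_mul 2)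
  have hratio : Tendsto (fun t => q t ^ 2 / t) (𝓝[>] 0) atTop := by
    rwa [tendsto_exp_comp_nhds_zero, tendsto_neg_atBot_iff,
      tendsto_const_mul_atTop_of_pos (by positivity)] at hexp
  refine ((continuous_sqrt.tendsto' 0 0 sqrt_zero).comp
    (tendsto_inv_atTop_zero.comp hratio)).congr' ?_
  filter_upwards [Ioc_mem_nhdsGT one_pos] with t ht
  simp only [Function.comp_apply, inv_div]
  rw [sqrt_div' _ (sq_nonneg _), sqrt_sq (hpos t ht).le]
end

section
/- Let W be a standard Wiener process and q a positive measurable function on (0,1], and 0 < p < ∞. Then ∫_{0+}^1 t^{p/2}/q(t) dt < ∞ if and only if ∫_{0+}^1 |W(t)|^p/q(t) dt < ∞ almost surely. -/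
/-!
Write `m t = t ^ (p/2) / q t` and `Y t = |W t| ^ p / q t`. Since `W t` has the law of
`√t • N(0,1)`, `E (Y t) = C_p * m t` and `P (m t ≤ Y t) = P (1 ≤ |N(0,1)|) = ρ > 0` for every `t`,
so Tonelli gives one direction. Conversely, suppose `∫ m = ∞` while `∫ Y < ∞` almost surely.
Choose sets `s k`, outside the `k`-th spanning set of the measure `m dt`, with
`1 ≤ ∫_{s k} m < ∞`. The normalised truncations `G k = ∫_{s k} min Y m / ∫_{s k} m` are bounded
by `1` and tend to `0` almost surely (they are tails of a finite integral), yet `E (G k) ≥ ρ` by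
Markov's inequality, contradicting dominated convergence.
-/

open MeasureTheory Filter Set ProbabilityTheory

/-- `W` is a standard Wiener process (Brownian motion) on `[0,∞)` over `(Ω, μ)`:
starts at 0, has independent Gaussian increments with the right variance,
and has a.s. continuous paths. -/
structure IsStandardBM {Ω : Type*} [MeasurableSpace Ω] (μ : Measure Ω)
    (W : ℝ → Ω → ℝ) : Prop where
  meas : ∀ t, Measurable (W t)
  start : ∀ᵐ ω ∂μ, W 0 ω = 0
  gauss : ∀ s t : ℝ, 0 ≤ s → s ≤ t →
    μ.map (fun ω => W t ω - W s ω) = gaussianReal 0 (Real.toNNReal (t - s))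
  indep : ∀ (n : ℕ) (ts : Fin (n+1) → ℝ), Monotone ts → (∀ i, 0 ≤ ts i) →
    iIndepFun
      (fun i : Fin n => fun ω => W (ts i.succ) ω - W (ts i.castSucc) ω) μ
  cont : ∀ᵐ ω ∂μ, Continuous fun t => W t ω

open scoped ENNReal Topology

section SpanningSets

variable {T : Type*} [MeasurableSpace T]

theorem exists_subset_compl_spanningSets_one_le_measure_lt_top (η : Measure T) [SigmaFinite η]
    (h : η univ = ∞) (k : ℕ) :
    ∃ s ⊆ (spanningSets η k)ᶜ, MeasurableSet s ∧ 1 ≤ η s ∧ η s < ∞ := by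
  have hk := measure_spanningSets_lt_top η k
  obtain ⟨n, hn⟩ : ∃ n, η (spanningSets η k) + 1 < η (spanningSets η n) := by
    rw [← lt_iSup_iff, ← (monotone_spanningSets η).measure_iUnion, iUnion_spanningSets, h]
    exact ENNReal.add_lt_top.mpr ⟨hk, ENNReal.one_lt_top⟩
  refine ⟨spanningSets η n \ spanningSets η k, fun x hx => hx.2,
    (measurableSet_spanningSets η n).diff (measurableSet_spanningSets η k), ?_,
    (measure_mono sdiff_subset).trans_lt (measure_spanningSets_lt_top η n)⟩
  calc 1 ≤ η (spanningSets η n) - η (spanningSets η k) :=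
        ENNReal.le_sub_of_add_le_left hk.ne hn.le
    _ ≤ η (spanningSets η n \ spanningSets η k) := le_measure_sdiff

theorem tendsto_setLIntegral_compl_spanningSets (η : Measure T) [SigmaFinite η] {ν : Measure T}
    {f : T → ℝ≥0∞} (hf : ∫⁻ t, f t ∂ν ≠ ∞) :
    Tendsto (fun k => ∫⁻ t in (spanningSets η k)ᶜ, f t ∂ν) atTop (𝓝 0) := by
  have := isFiniteMeasure_withDensity hf
  have h_lim := tendsto_measure_iInter_atTop (μ := ν.withDensity f)
    (fun k => (measurableSet_spanningSets η k).compl.nullMeasurableSet)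
    (fun i j hij => compl_subset_compl.mpr (monotone_spanningSets η hij))
    ⟨0, measure_ne_top _ _⟩
  rw [← compl_iUnion, iUnion_spanningSets, compl_univ, measure_empty] at h_lim
  refine h_lim.congr fun k => ?_
  exact withDensity_apply _ (measurableSet_spanningSets η k).compl

end SpanningSets

section Comparison

variable {T Ω : Type*} [MeasurableSpace T] [MeasurableSpace Ω] {ν : Measure T} {μ : Measure Ω}
  {Y : T → Ω → ℝ≥0∞} {m : T → ℝ≥0∞}

theorem ae_lintegral_lt_top_of_lintegral_le_mul [SFinite ν] [SFinite μ]
    (hY : Measurable (Function.uncurry Y)) {C : ℝ≥0∞} (hC : C ≠ ∞)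
    (h_mean : ∀ᵐ t ∂ν, ∫⁻ ω, Y t ω ∂μ ≤ C * m t) (hm : ∫⁻ t, m t ∂ν < ∞) :
    ∀ᵐ ω ∂μ, ∫⁻ t, Y t ω ∂ν < ∞ := by
  have hY' : Measurable fun z : Ω × T => Y z.2 z.1 := hY.comp measurable_swap
  refine ae_lt_top hY'.lintegral_prod_right' (ne_of_lt ?_)
  calc ∫⁻ ω, ∫⁻ t, Y t ω ∂ν ∂μ = ∫⁻ t, ∫⁻ ω, Y t ω ∂μ ∂ν :=
        lintegral_lintegral_swap hY'.aemeasurable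
    _ ≤ ∫⁻ t, C * m t ∂ν := lintegral_mono_ae h_mean
    _ = C * ∫⁻ t, m t ∂ν := lintegral_const_mul' _ _ hC
    _ < ∞ := ENNReal.mul_lt_top hC.lt_top hm

theorem mul_lintegral_le_lintegral_lintegral_min [SFinite ν] [SFinite μ]
    (hY : Measurable (Function.uncurry Y)) (hm : Measurable m) {ρ : ℝ≥0∞}
    (h_tail : ∀ᵐ t ∂ν, ρ ≤ μ {ω | m t ≤ Y t ω}) :
    ρ * ∫⁻ t, m t ∂ν ≤ ∫⁻ ω, ∫⁻ t, min (Y t ω) (m t) ∂ν ∂μ := by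
  have h_min : Measurable fun z : Ω × T => min (Y z.2 z.1) (m z.2) :=
    (hY.comp measurable_swap).min (hm.comp measurable_snd)
  calc ρ * ∫⁻ t, m t ∂ν = ∫⁻ t, ρ * m t ∂ν := (lintegral_const_mul ρ hm).symm
    _ ≤ ∫⁻ t, m t * μ {ω | m t ≤ min (Y t ω) (m t)} ∂ν := by
        refine lintegral_mono_ae (h_tail.mono fun t ht => ?_)
        rw [mul_comm]
        gcongr
        simpa only [le_min_iff, le_refl, and_true] using ht
    _ ≤ ∫⁻ t, ∫⁻ ω, min (Y t ω) (m t) ∂μ ∂ν := lintegral_mono fun t =>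
        mul_meas_ge_le_lintegral₀
          (h_min.comp (measurable_id.prodMk measurable_const)).aemeasurable _
    _ = ∫⁻ ω, ∫⁻ t, min (Y t ω) (m t) ∂ν ∂μ := (lintegral_lintegral_swap h_min.aemeasurable).symm

theorem not_ae_lintegral_lt_top_of_le_measure [SigmaFinite ν] [IsFiniteMeasure μ]
    (hY : Measurable (Function.uncurry Y)) (hm : Measurable m) (hm_top : ∀ᵐ t ∂ν, m t ≠ ∞)
    {ρ : ℝ≥0∞} (hρ : ρ ≠ 0) (h_tail : ∀ᵐ t ∂ν, ρ ≤ μ {ω | m t ≤ Y t ω})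
    (h_inf : ∫⁻ t, m t ∂ν = ∞) :
    ¬ ∀ᵐ ω ∂μ, ∫⁻ t, Y t ω ∂ν < ∞ := by
  intro h_fin
  set η := ν.withDensity m
  have : SigmaFinite η := SigmaFinite.withDensity_of_ne_top hm_top
  have hη : ∀ s, MeasurableSet s → η s = ∫⁻ t in s, m t ∂ν := fun s hs => withDensity_apply _ hs
  choose s hs_sub hs_meas hs_one hs_top using
    exists_subset_compl_spanningSets_one_le_measure_lt_top η
      (by rwa [hη _ MeasurableSet.univ, Measure.restrict_univ])
  have h_min : Measurable fun z : Ω × T => min (Y z.2 z.1) (m z.2) :=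
    (hY.comp measurable_swap).min (hm.comp measurable_snd)
  set G : ℕ → Ω → ℝ≥0∞ := fun k ω => (∫⁻ t in s k, min (Y t ω) (m t) ∂ν) / η (s k)
  have hG_meas : ∀ k, Measurable (G k) := fun k =>
    (h_min.lintegral_prod_right' (ν := ν.restrict (s k))).div_const _
  have hG_le : ∀ k ω, G k ω ≤ 1 := fun k ω => ENNReal.div_le_of_le_mul <| by
    rw [one_mul, hη _ (hs_meas k)]
    exact lintegral_mono fun t => min_le_right _ _
  have hG_lim : ∀ᵐ ω ∂μ, Tendsto (G · ω) atTop (𝓝 0) := by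
    filter_upwards [h_fin] with ω hω
    refine tendsto_of_tendsto_of_tendsto_of_le_of_le tendsto_const_nhds
      (tendsto_setLIntegral_compl_spanningSets η hω.ne) (fun k => zero_le) fun k => ?_
    calc G k ω ≤ ∫⁻ t in s k, min (Y t ω) (m t) ∂ν :=
          ENNReal.div_le_of_le_mul (le_mul_of_one_le_right' (hs_one k))
      _ ≤ ∫⁻ t in (spanningSets η k)ᶜ, Y t ω ∂ν :=
          lintegral_mono' (Measure.restrict_mono (hs_sub k) le_rfl) fun t => min_le_left _ _
  have hG_int : ∀ k, ρ ≤ ∫⁻ ω, G k ω ∂μ := by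
    intro k
    have hk_pos : η (s k) ≠ 0 := (one_pos.trans_le (hs_one k)).ne'
    simp only [G, div_eq_mul_inv]
    rw [lintegral_mul_const' _ _ (ENNReal.inv_ne_top.mpr hk_pos), ← div_eq_mul_inv,
      ENNReal.le_div_iff_mul_le (Or.inl hk_pos) (Or.inl (hs_top k).ne),
      hη _ (hs_meas k)]
    exact mul_lintegral_le_lintegral_lintegral_min hY hm (ae_restrict_of_ae h_tail)
  have h_lim : Tendsto (fun k => ∫⁻ ω, G k ω ∂μ) atTop (𝓝 0) := by
    simpa using tendsto_lintegral_of_dominated_convergence (fun _ => 1) hG_meas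
      (fun k => ae_of_all _ (hG_le k)) (by simp) hG_lim
  exact hρ (nonpos_iff_eq_zero.mp (ge_of_tendsto' h_lim hG_int))

theorem lintegral_lt_top_iff_ae_lintegral_lt_top [SigmaFinite ν] [IsFiniteMeasure μ]
    (hY : Measurable (Function.uncurry Y)) (hm : Measurable m) (hm_top : ∀ᵐ t ∂ν, m t ≠ ∞)
    {C ρ : ℝ≥0∞} (hC : C ≠ ∞) (hρ : ρ ≠ 0) (h_mean : ∀ᵐ t ∂ν, ∫⁻ ω, Y t ω ∂μ ≤ C * m t)
    (h_tail : ∀ᵐ t ∂ν, ρ ≤ μ {ω | m t ≤ Y t ω}) :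
    ∫⁻ t, m t ∂ν < ∞ ↔ ∀ᵐ ω ∂μ, ∫⁻ t, Y t ω ∂ν < ∞ :=
  ⟨ae_lintegral_lt_top_of_lintegral_le_mul hY hC h_mean, fun h_fin => lt_top_iff_ne_top.mpr
    fun h_inf => not_ae_lintegral_lt_top_of_le_measure hY hm hm_top hρ h_tail h_inf h_fin⟩

end Comparison

section Gaussian

open Real

theorem gaussianReal_toNNReal_eq_map {t : ℝ} (ht : 0 ≤ t) :
    gaussianReal 0 t.toNNReal = (gaussianReal 0 1).map (√t * ·) := by
  rw [gaussianReal_map_const_mul, mul_zero, mul_one]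
  congr
  ext
  simp [sq_sqrt ht, coe_toNNReal _ ht]

theorem lintegral_ofReal_abs_rpow_gaussianReal {t : ℝ} (ht : 0 ≤ t) (p : ℝ) :
    ∫⁻ x, ENNReal.ofReal (|x| ^ p) ∂gaussianReal 0 t.toNNReal
      = ENNReal.ofReal (t ^ (p / 2)) * ∫⁻ x, ENNReal.ofReal (|x| ^ p) ∂gaussianReal 0 1 := by
  rw [gaussianReal_toNNReal_eq_map ht, lintegral_map (by fun_prop) (by fun_prop),
    ← lintegral_const_mul _ (by fun_prop)]
  congr 1 with x
  rw [abs_mul, abs_of_nonneg (sqrt_nonneg t), mul_rpow (sqrt_nonneg t) (abs_nonneg x),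
    ENNReal.ofReal_mul (by positivity), sqrt_eq_rpow, ← rpow_mul ht, one_div_mul_eq_div]

theorem lintegral_ofReal_abs_rpow_gaussianReal_lt_top {p : ℝ} (hp : 0 < p) :
    ∫⁻ x, ENNReal.ofReal (|x| ^ p) ∂gaussianReal 0 1 < ∞ := by
  have h := (memLp_id_gaussianReal (μ := 0) (v := 1) p.toNNReal).eLpNorm_lt_top
  rw [eLpNorm_lt_top_iff_lintegral_rpow_enorm_lt_top (by simpa using hp) ENNReal.coe_ne_top,
    ENNReal.coe_toReal, coe_toNNReal _ hp.le] at h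
  convert h using 3 with x
  rw [id, enorm_eq_ofReal_abs, ENNReal.ofReal_rpow_of_nonneg (abs_nonneg x) hp.le]

theorem gaussianReal_setOf_sqrt_le_abs {t : ℝ} (ht : 0 < t) :
    gaussianReal 0 t.toNNReal {x | √t ≤ |x|} = gaussianReal 0 1 {x | 1 ≤ |x|} := by
  rw [gaussianReal_toNNReal_eq_map ht.le,
    Measure.map_apply (by fun_prop) (measurableSet_le measurable_const measurable_abs)]
  congr 1 with x
  simp only [mem_preimage, mem_ofPred_eq, abs_mul, abs_of_nonneg (sqrt_nonneg t)]
  exact ⟨fun h => le_of_mul_le_mul_left (by simpa using h) (sqrt_pos.mpr ht),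
    fun h => by simpa using mul_le_mul_of_nonneg_left h (sqrt_nonneg t)⟩

theorem gaussianReal_setOf_one_le_abs_ne_zero : gaussianReal 0 1 {x | 1 ≤ |x|} ≠ 0 := by
  intro h
  have h_vol := gaussianReal_absolutelyContinuous' 0 one_ne_zero h
  have : volume (Ici (1 : ℝ)) ≤ volume {x : ℝ | 1 ≤ |x|} :=
    measure_mono fun x hx => le_trans hx (le_abs_self x)
  simp [h_vol] at this

end Gaussian

theorem lintegral_rpow_div_lt_top_iff_ae_of_map_eq_gaussianReal {Ω : Type*} [MeasurableSpace Ω]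
    {μ : Measure Ω} [IsFiniteMeasure μ] {X : ℝ → Ω → ℝ} (hX : Measurable (Function.uncurry X))
    (h_law : ∀ t ∈ Ioc (0 : ℝ) 1, μ.map (X t) = gaussianReal 0 t.toNNReal)
    {q : ℝ → ℝ} (hq : Measurable q) {p : ℝ} (hp : 0 < p) :
    ∫⁻ t in Ioc (0 : ℝ) 1, ENNReal.ofReal (t ^ (p / 2) / q t) < ∞ ↔
      ∀ᵐ ω ∂μ, ∫⁻ t in Ioc (0 : ℝ) 1, ENNReal.ofReal (|X t ω| ^ p / q t) < ∞ := by
  have h_split : ∀ {a : ℝ}, 0 ≤ a → ∀ t,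
      ENNReal.ofReal (a / q t) = ENNReal.ofReal a * ENNReal.ofReal (q t)⁻¹ := fun ha t => by
    rw [div_eq_mul_inv, ENNReal.ofReal_mul ha]
  have hXt : ∀ t, Measurable (X t) := fun t => hX.of_uncurry_left
  refine lintegral_lt_top_iff_ae_lintegral_lt_top
    (C := ∫⁻ x, ENNReal.ofReal (|x| ^ p) ∂gaussianReal 0 1) (ρ := gaussianReal 0 1 {x | 1 ≤ |x|})
    ?_ (by fun_prop) (ae_of_all _ fun _ => ENNReal.ofReal_ne_top)
    (lintegral_ofReal_abs_rpow_gaussianReal_lt_top hp).ne gaussianReal_setOf_one_le_abs_ne_zero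
    ?_ ?_
  · exact ENNReal.measurable_ofReal.comp ((hX.abs.pow_const p).div (hq.comp measurable_fst))
  · refine ae_restrict_of_forall_mem measurableSet_Ioc fun t ht => le_of_eq ?_
    calc ∫⁻ ω, ENNReal.ofReal (|X t ω| ^ p / q t) ∂μ
        = (∫⁻ x, ENNReal.ofReal (|x| ^ p) ∂μ.map (X t)) * ENNReal.ofReal (q t)⁻¹ := by
          rw [lintegral_map (by fun_prop) (hXt t),
            ← lintegral_mul_const' _ _ ENNReal.ofReal_ne_top]
          exact lintegral_congr fun ω => h_split (by positivity) t
      _ = _ := by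
          rw [h_law t ht, lintegral_ofReal_abs_rpow_gaussianReal ht.1.le,
            h_split (Real.rpow_nonneg ht.1.le _) t]
          ring
  · refine ae_restrict_of_forall_mem measurableSet_Ioc fun t ht => ?_
    rw [← gaussianReal_setOf_sqrt_le_abs ht.1, ← h_law t ht,
      Measure.map_apply (hXt t) (measurableSet_le measurable_const measurable_abs)]
    refine measure_mono fun ω (hω : √t ≤ |X t ω|) => ?_
    change ENNReal.ofReal _ ≤ ENNReal.ofReal _
    rw [h_split (Real.rpow_nonneg ht.1.le _) t, h_split (by positivity) t]
    gcongr
    calc t ^ (p / 2) = √t ^ p := by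
          rw [Real.sqrt_eq_rpow, ← Real.rpow_mul ht.1.le, one_div_mul_eq_div]
      _ ≤ |X t ω| ^ p := Real.rpow_le_rpow (Real.sqrt_nonneg t) hω hp.le

theorem exists_measurable_uncurry_ae_eq_of_ae_continuous {ι Ω E : Type*}
    [TopologicalSpace ι] [TopologicalSpace.MetrizableSpace ι] [SecondCountableTopology ι]
    [MeasurableSpace ι] [OpensMeasurableSpace ι] [MeasurableSpace Ω] {μ : Measure Ω}
    [TopologicalSpace E] [TopologicalSpace.PseudoMetrizableSpace E] [MeasurableSpace E]
    [BorelSpace E] [Zero E] {W : ι → Ω → E}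
    (h_meas : ∀ t, Measurable (W t)) (h_cont : ∀ᵐ ω ∂μ, Continuous fun t => W t ω) :
    ∃ X : ι → Ω → E, Measurable (Function.uncurry X) ∧ ∀ᵐ ω ∂μ, ∀ t, X t ω = W t ω := by
  set N := toMeasurable μ {ω | ¬Continuous fun t => W t ω}
  have hN : ∀ᵐ ω ∂μ, ω ∉ N := by
    simp only [ae_iff, not_not, ofPred_mem_eq, N, measure_toMeasurable]
    exact h_cont
  refine ⟨fun t => Nᶜ.indicator (W t), measurable_uncurry_of_continuous_of_measurable
    (fun ω => ?_) fun t => (h_meas t).indicator (measurableSet_toMeasurable _ _).compl,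
    hN.mono fun ω hω t => indicator_of_mem hω _⟩
  by_cases hω : ω ∈ N
  · simpa [hω] using continuous_const
  · simpa [hω] using not_not.mp fun h => hω (subset_toMeasurable _ _ h)

namespace IsStandardBM

variable {Ω : Type*} [MeasurableSpace Ω] {μ : Measure Ω} {W : ℝ → Ω → ℝ}

theorem map_eq_gaussianReal (hW : IsStandardBM μ W) {t : ℝ} (ht : 0 ≤ t) :
    μ.map (W t) = gaussianReal 0 t.toNNReal := by
  rw [← sub_zero t, ← hW.gauss 0 t le_rfl ht]
  exact Measure.map_congr (hW.start.mono fun ω h => by simp [h])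

end IsStandardBM

theorem stmt5_general {Ω : Type*} [MeasurableSpace Ω] (μ : Measure Ω) [IsProbabilityMeasure μ]
    (W : ℝ → Ω → ℝ) (hW : IsStandardBM μ W) (q : ℝ → ℝ) (hqm : Measurable q)
    (p : ℝ) (hp : 0 < p) :
    (∫⁻ t in Set.Ioc (0:ℝ) 1, ENNReal.ofReal (t ^ (p/2) / q t) < ⊤) ↔
      (∀ᵐ ω ∂μ, ∫⁻ t in Set.Ioc (0:ℝ) 1, ENNReal.ofReal (|W t ω| ^ p / q t) < ⊤) := by
  obtain ⟨X, hX, hXW⟩ := exists_measurable_uncurry_ae_eq_of_ae_continuous hW.meas hW.cont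
  have h_law : ∀ t ∈ Ioc (0 : ℝ) 1, μ.map (X t) = gaussianReal 0 t.toNNReal := fun t ht => by
    rw [Measure.map_congr (hXW.mono fun ω h => h t), hW.map_eq_gaussianReal ht.1.le]
  rw [lintegral_rpow_div_lt_top_iff_ae_of_map_eq_gaussianReal hX h_law hqm hp]
  exact eventually_congr (hXW.mono fun ω h => by simp only [h])

/-- `∫₀¹ t^{p/2}/q(t) dt < ∞` iff `∫₀¹ |W(t)|^p/q(t) dt < ∞` almost surely. -/
theorem stmt5 {Ω : Type*} [MeasurableSpace Ω] (μ : Measure Ω) [IsProbabilityMeasure μ]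
    (W : ℝ → Ω → ℝ) (hW : IsStandardBM μ W) (q : ℝ → ℝ) (hqm : Measurable q)
    (hq : ∀ t ∈ Set.Ioc (0:ℝ) 1, 0 < q t) (p : ℝ) (hp : 0 < p) :
    (∫⁻ t in Set.Ioc (0:ℝ) 1, ENNReal.ofReal (t ^ (p/2) / q t) < ⊤) ↔
      (∀ᵐ ω ∂μ, ∫⁻ t in Set.Ioc (0:ℝ) 1, ENNReal.ofReal (|W t ω| ^ p / q t) < ⊤) :=
  stmt5_general μ W hW q hqm p hp
end

section
/- Let X be a symmetric random variable with E[X² 1_{|X|≤x}] = 0 for x ≤ 1 and l(x) = E[X² 1_{|X|≤x}] ~ exp((log x)^α) as x → ∞ for fixed 0 < α < 1. Then, with η_j = inf{s ≥ b+1 : l(s)/s² ≤ 1/j}, for all sufficiently large n one has η_n ≥ √n and max_{1≤j≤√n} η_j ≤ n^{3/10}, and consequently max_{1≤j≤√n} l(η_j)/l(η_n) ≤ 2·exp((0.3^α − 0.5^α)(log n)^α) → 0 as n → ∞. -/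
open MeasureTheory Filter Set ProbabilityTheory BoundedContinuousFunction

variable {Ω : Type*} [MeasurableSpace Ω]

/-- The truncated second moment `l(x) = E[X² 1_{|X| ≤ x}]`. -/
noncomputable def truncMom (μ : Measure Ω) (X : Ω → ℝ) (x : ℝ) : ℝ :=
  ∫ ω in {ω | |X ω| ≤ x}, (X ω)^2 ∂μ

/-- `b = inf {x ≥ 1 : l(x) > 0}`. -/
noncomputable def bCon (μ : Measure Ω) (X : Ω → ℝ) : ℝ :=
  sInf {x : ℝ | 1 ≤ x ∧ 0 < truncMom μ X x}

/-- `η_j = inf {s ≥ b+1 : l(s)/s² ≤ 1/j}`. -/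
noncomputable def eta (μ : Measure Ω) (X : Ω → ℝ) (j : ℕ) : ℝ :=
  sInf {s : ℝ | bCon μ X + 1 ≤ s ∧ truncMom μ X s / s^2 ≤ 1 / (j:ℝ)}

/-!
Since `l(x) ~ exp((log x)^α)` with `α < 1`, `l` tends to infinity, but more slowly than any
power of `x`. The first fact makes `l(s)/s² > 1/n` for `b + 1 ≤ s < √n`, so `η_n ≥ √n`; the second
gives `l(s)/s² ≤ n^{-1/2} ≤ 1/j` at `s = n^{3/10}`, so `η_j ≤ n^{3/10}`. As `l` is monotone, the
ratio is then at most `l(n^{3/10})/l(√n) ≈ exp((0.3^α − 0.5^α)(log n)^α)`.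
-/

open Real Topology

section Asymptotics

variable {α : ℝ}

lemma tendsto_log_rpow_atTop (hα : 0 < α) : Tendsto (fun x : ℝ => log x ^ α) atTop atTop :=
  (tendsto_rpow_atTop hα).comp tendsto_log_atTop

lemma tendsto_exp_log_rpow_atTop (hα : 0 < α) :
    Tendsto (fun x : ℝ => exp (log x ^ α)) atTop atTop :=
  tendsto_exp_atTop.comp (tendsto_log_rpow_atTop hα)

lemma tendsto_exp_mul_log_rpow_nhds_zero {c : ℝ} (hc : c < 0) (hα : 0 < α) :
    Tendsto (fun x : ℝ => exp (c * log x ^ α)) atTop (𝓝 0) :=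
  tendsto_exp_atBot.comp ((tendsto_log_rpow_atTop hα).const_mul_atTop_of_neg hc)

lemma log_rpow_rpow {x r : ℝ} (hx : 1 ≤ x) (hr : 0 ≤ r) :
    log (x ^ r) ^ α = r ^ α * log x ^ α := by
  rw [log_rpow (by linarith), mul_rpow hr (log_nonneg hx)]

lemma eventually_rpow_le_mul_self (hα : α < 1) {ε : ℝ} (hε : 0 < ε) :
    ∀ᶠ t : ℝ in atTop, t ^ α ≤ ε * t := by
  have h : Tendsto (fun t : ℝ => t ^ (α - 1)) atTop (𝓝 0) := by
    simpa using tendsto_rpow_neg_atTop (sub_pos.2 hα)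
  filter_upwards [h.eventually (eventually_le_nhds hε), eventually_gt_atTop 0] with t ht ht0
  calc t ^ α = t ^ (α - 1) * t := by rw [← rpow_add_one ht0.ne']; norm_num
    _ ≤ ε * t := by gcongr

lemma eventually_mul_exp_log_rpow_le_rpow (hα : α < 1) {c ε : ℝ} (hc : 0 < c) (hε : 0 < ε) :
    ∀ᶠ x : ℝ in atTop, c * exp (log x ^ α) ≤ x ^ ε := by
  have hlog : ∀ᶠ t : ℝ in atTop, log c + t ^ α ≤ ε * t := by
    filter_upwards [eventually_rpow_le_mul_self hα (half_pos hε),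
      eventually_ge_atTop (2 * log c / ε)] with t ht htc
    have : log c ≤ ε / 2 * t := by
      rw [div_le_iff₀ hε] at htc; linarith
    linarith
  filter_upwards [tendsto_log_atTop.eventually hlog, eventually_gt_atTop 0] with x hx hx0
  calc c * exp (log x ^ α) = exp (log c + log x ^ α) := by rw [exp_add, exp_log hc]
    _ ≤ exp (log x * ε) := exp_le_exp.2 (by linarith)
    _ = x ^ ε := (rpow_def_of_pos hx0 ε).symm

end Asymptotics

section RatioBounds

variable {β : Type*} {L : Filter β} {f g : β → ℝ} {c : ℝ}

lemma eventually_le_mul_of_tendsto_div_one (hg : ∀ᶠ x in L, 0 < g x)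
    (h : Tendsto (fun x => f x / g x) L (𝓝 1)) (hc : 1 < c) :
    ∀ᶠ x in L, f x ≤ c * g x := by
  filter_upwards [hg, h.eventually (eventually_le_nhds hc)] with x hgx hx
  rwa [div_le_iff₀ hgx] at hx

lemma eventually_mul_le_of_tendsto_div_one (hg : ∀ᶠ x in L, 0 < g x)
    (h : Tendsto (fun x => f x / g x) L (𝓝 1)) (hc : c < 1) :
    ∀ᶠ x in L, c * g x ≤ f x := by
  filter_upwards [hg, h.eventually (eventually_ge_nhds hc)] with x hgx hx
  rwa [le_div_iff₀ hgx] at hx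

end RatioBounds

section MonotoneGrowth

variable {l : ℝ → ℝ}

lemma eventually_sq_lt_mul_of_tendsto_atTop (hmono : Monotone l) (htop : Tendsto l atTop atTop)
    {a : ℝ} (ha : 0 ≤ a) (hla : 0 < l a) :
    ∀ᶠ n : ℝ in atTop, ∀ s, a ≤ s → s ^ 2 < n → s ^ 2 < n * l s := by
  obtain ⟨M, hM⟩ := eventually_atTop.1 (htop.eventually_ge_atTop 1)
  filter_upwards [eventually_ge_atTop (M ^ 2 / l a)] with n hn s has hsn
  have hn0 : 0 ≤ n := (sq_nonneg s).trans hsn.le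
  rcases le_or_gt M s with hMs | hsM
  · calc s ^ 2 < n := hsn
      _ ≤ n * l s := le_mul_of_one_le_right hn0 (hM s hMs)
  · calc s ^ 2 < M ^ 2 := pow_lt_pow_left₀ hsM (ha.trans has) two_ne_zero
      _ ≤ n * l a := (div_le_iff₀ hla).1 hn
      _ ≤ n * l s := mul_le_mul_of_nonneg_left (hmono has) hn0

variable {α r s : ℝ}

lemma eventually_div_le_two_mul_exp (hmono : Monotone l)
    (hupper : ∀ᶠ x in atTop, l x ≤ 5 / 4 * exp (log x ^ α))
    (hlower : ∀ᶠ x in atTop, 3 / 4 * exp (log x ^ α) ≤ l x) (hr : 0 < r) (hs : 0 < s) :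
    ∀ᶠ x in atTop, ∀ u v, u ≤ x ^ r → x ^ s ≤ v →
      l u / l v ≤ 2 * exp ((r ^ α - s ^ α) * log x ^ α) := by
  filter_upwards [(tendsto_rpow_atTop hr).eventually hupper,
    (tendsto_rpow_atTop hs).eventually hlower, eventually_ge_atTop 1] with x hxr hxs hx u v hu hv
  rw [log_rpow_rpow hx hr.le] at hxr
  rw [log_rpow_rpow hx hs.le] at hxs
  have hden : 0 < 3 / 4 * exp (s ^ α * log x ^ α) := by positivity
  calc l u / l v ≤ 5 / 4 * exp (r ^ α * log x ^ α) / (3 / 4 * exp (s ^ α * log x ^ α)) :=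
        div_le_div₀ (by positivity) ((hmono hu).trans hxr) hden (hxs.trans (hmono hv))
    _ = 5 / 3 * exp ((r ^ α - s ^ α) * log x ^ α) := by
        rw [sub_mul, exp_sub]; field_simp
    _ ≤ 2 * exp ((r ^ α - s ^ α) * log x ^ α) := by gcongr; norm_num

end MonotoneGrowth

section TruncatedMoment

variable {μ : Measure Ω} {X : Ω → ℝ}

lemma integrableOn_sq_abs_le [IsFiniteMeasure μ] (hX : Measurable X) (x : ℝ) :
    IntegrableOn (fun ω => X ω ^ 2) {ω | |X ω| ≤ x} μ := by
  refine Measure.integrableOn_of_bounded (M := x ^ 2) (measure_ne_top _ _)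
    (hX.pow_const 2).aestronglyMeasurable ?_
  filter_upwards [ae_restrict_mem (measurableSet_le hX.abs measurable_const)] with ω hω
  rw [Real.norm_eq_abs, abs_of_nonneg (sq_nonneg _), ← sq_abs]
  exact pow_le_pow_left₀ (abs_nonneg _) hω 2

lemma truncMom_mono [IsFiniteMeasure μ] (hX : Measurable X) : Monotone (truncMom μ X) :=
  fun _ y hxy => setIntegral_mono_set (integrableOn_sq_abs_le hX y)
    (Eventually.of_forall fun _ => sq_nonneg _)
    (LE.le.eventuallyLE fun _ hω => le_trans hω hxy)

lemma one_le_bCon (h : ∃ x, 1 ≤ x ∧ 0 < truncMom μ X x) : 1 ≤ bCon μ X :=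
  le_csInf h fun _ hy => hy.1

lemma truncMom_bCon_add_one_pos (hmono : Monotone (truncMom μ X))
    (h : ∃ x, 1 ≤ x ∧ 0 < truncMom μ X x) : 0 < truncMom μ X (bCon μ X + 1) := by
  obtain ⟨y, hy, hyb⟩ := exists_lt_of_csInf_lt h (lt_add_one (bCon μ X))
  exact hy.2.trans_le (hmono hyb.le)

lemma eta_le {j : ℕ} {s : ℝ} (hs : bCon μ X + 1 ≤ s) (hsj : truncMom μ X s / s ^ 2 ≤ 1 / j) :
    eta μ X j ≤ s :=
  csInf_le ⟨bCon μ X + 1, fun _ ht => ht.1⟩ ⟨hs, hsj⟩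

lemma eventually_sqrt_le_eta (hmono : Monotone (truncMom μ X))
    (htop : Tendsto (truncMom μ X) atTop atTop)
    (hlin : ∀ᶠ x in atTop, truncMom μ X x ≤ x) :
    ∀ᶠ n : ℕ in atTop, √n ≤ eta μ X n := by
  have hpos : ∃ x, 1 ≤ x ∧ 0 < truncMom μ X x :=
    ((eventually_ge_atTop 1).and (htop.eventually_gt_atTop 0)).exists
  have hb := one_le_bCon hpos
  have hsq := eventually_sq_lt_mul_of_tendsto_atTop hmono htop (by linarith)
    (truncMom_bCon_add_one_pos hmono hpos)
  filter_upwards [tendsto_natCast_atTop_atTop.eventually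
    (hsq.and (hlin.and (eventually_ge_atTop (bCon μ X + 1))))] with n ⟨hsqn, hlinn, hbn⟩
  have hn : (0 : ℝ) < n := by linarith
  have hmem : truncMom μ X n / (n : ℝ) ^ 2 ≤ 1 / n := by
    rw [div_le_div_iff₀ (by positivity) hn]; nlinarith
  refine le_csInf ⟨n, hbn, hmem⟩ fun s ⟨hs, hsn⟩ => ?_
  by_contra! hlt
  have hs0 : 0 < s := by linarith
  have hs2 : s ^ 2 < n := by
    simpa [sq_sqrt hn.le] using pow_lt_pow_left₀ hlt hs0.le two_ne_zero
  rw [div_le_div_iff₀ (by positivity) hn, one_mul, mul_comm] at hsn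
  exact (hsqn s hs hs2).not_ge hsn

lemma eventually_eta_le_rpow (hsmall : ∀ᶠ x in atTop, truncMom μ X x ≤ x ^ ((1 : ℝ) / 3)) :
    ∀ᶠ n : ℕ in atTop, ∀ j : ℕ, 1 ≤ j → (j : ℝ) ≤ √n → eta μ X j ≤ (n : ℝ) ^ ((3 : ℝ) / 10) := by
  filter_upwards [tendsto_natCast_atTop_atTop.eventually
    ((tendsto_rpow_atTop (by norm_num : (0 : ℝ) < 3 / 10)).eventually
      (hsmall.and (eventually_ge_atTop (bCon μ X + 1)))),
    eventually_gt_atTop 0] with n ⟨hl, hb⟩ hn j hj hjn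
  have hn' : (0 : ℝ) < n := Nat.cast_pos.2 hn
  have hj' : (0 : ℝ) < j := Nat.cast_pos.2 hj
  refine eta_le hb ?_
  rw [div_le_div_iff₀ (by positivity) hj', one_mul]
  calc truncMom μ X ((n : ℝ) ^ ((3 : ℝ) / 10)) * j
      ≤ ((n : ℝ) ^ ((3 : ℝ) / 10)) ^ ((1 : ℝ) / 3) * (n : ℝ) ^ ((1 : ℝ) / 2) :=
        mul_le_mul hl (hjn.trans_eq (sqrt_eq_rpow _)) hj'.le (by positivity)
    _ = ((n : ℝ) ^ ((3 : ℝ) / 10)) ^ 2 := by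
        rw [← rpow_mul hn'.le, ← rpow_natCast, ← rpow_mul hn'.le, ← rpow_add hn']
        norm_num

end TruncatedMoment

theorem stmt15_general (μ : Measure Ω) [IsProbabilityMeasure μ] (X : Ω → ℝ)
    (hmeas : Measurable X)
    (α : ℝ) (hα : α ∈ Set.Ioo (0:ℝ) 1)
    (hasymp : Tendsto (fun x : ℝ => truncMom μ X x / Real.exp (Real.log x ^ α))
      atTop (nhds 1)) :
    (∀ᶠ n : ℕ in atTop,
      Real.sqrt n ≤ eta μ X n ∧
      ∀ j : ℕ, 1 ≤ j → (j:ℝ) ≤ Real.sqrt n →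
        eta μ X j ≤ (n:ℝ) ^ ((3:ℝ)/10) ∧
        truncMom μ X (eta μ X j) / truncMom μ X (eta μ X n) ≤
          2 * Real.exp (((0.3:ℝ) ^ α - (0.5:ℝ) ^ α) * Real.log n ^ α)) ∧
    Tendsto (fun n : ℕ =>
        2 * Real.exp (((0.3:ℝ) ^ α - (0.5:ℝ) ^ α) * Real.log n ^ α))
      atTop (nhds 0) := by
  obtain ⟨hα0, hα1⟩ := hα
  have hmono := truncMom_mono (μ := μ) hmeas
  have hexp : ∀ᶠ x in atTop, 0 < exp (log x ^ α) := Eventually.of_forall fun _ => exp_pos _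
  have hupper := eventually_le_mul_of_tendsto_div_one hexp hasymp (by norm_num : (1 : ℝ) < 5 / 4)
  have hlower := eventually_mul_le_of_tendsto_div_one hexp hasymp (by norm_num : (3 / 4 : ℝ) < 1)
  have hsmall {ε : ℝ} (hε : 0 < ε) : ∀ᶠ x in atTop, truncMom μ X x ≤ x ^ ε :=
    (hupper.and (eventually_mul_exp_log_rpow_le_rpow hα1 (by norm_num) hε)).mono
      fun _ h => h.1.trans h.2
  have htop : Tendsto (truncMom μ X) atTop atTop := tendsto_atTop_mono' _ hlower
    ((tendsto_exp_log_rpow_atTop hα0).const_mul_atTop (by norm_num))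
  have hratio := eventually_div_le_two_mul_exp hmono hupper hlower
    (by norm_num : (0 : ℝ) < 3 / 10) (by norm_num : (0 : ℝ) < 1 / 2)
  have hneg : (0.3 : ℝ) ^ α - (0.5 : ℝ) ^ α < 0 :=
    sub_neg.2 (rpow_lt_rpow (by norm_num) (by norm_num) hα0)
  refine ⟨?_, by simpa using
    ((tendsto_exp_mul_log_rpow_nhds_zero hneg hα0).comp tendsto_natCast_atTop_atTop).const_mul 2⟩
  filter_upwards [eventually_sqrt_le_eta hmono htop (by simpa using hsmall one_pos),
    eventually_eta_le_rpow (hsmall (by norm_num)),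
    tendsto_natCast_atTop_atTop.eventually hratio] with n hn hj hr
  refine ⟨hn, fun j hj1 hjn => ⟨hj j hj1 hjn, ?_⟩⟩
  convert hr _ _ (hj j hj1 hjn) ((sqrt_eq_rpow _).symm.trans_le hn) using 4; norm_num

/-- For the symmetric example with `l(x) ~ exp((log x)^α)`, `0 < α < 1`:
eventually `η_n ≥ √n`, `max_{1≤j≤√n} η_j ≤ n^{3/10}`, and consequently
`max_{1≤j≤√n} l(η_j)/l(η_n) ≤ 2 exp((0.3^α − 0.5^α)(log n)^α) → 0`. -/
theorem stmt15 (μ : Measure Ω) [IsProbabilityMeasure μ] (X : Ω → ℝ)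
    (hmeas : Measurable X)
    (hsym : μ.map X = μ.map (fun ω => -X ω))
    (α : ℝ) (hα : α ∈ Set.Ioo (0:ℝ) 1)
    (hzero : ∀ x : ℝ, x ≤ 1 → truncMom μ X x = 0)
    (hasymp : Tendsto (fun x : ℝ => truncMom μ X x / Real.exp (Real.log x ^ α))
      atTop (nhds 1)) :
    (∀ᶠ n : ℕ in atTop,
      Real.sqrt n ≤ eta μ X n ∧
      ∀ j : ℕ, 1 ≤ j → (j:ℝ) ≤ Real.sqrt n →
        eta μ X j ≤ (n:ℝ) ^ ((3:ℝ)/10) ∧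
        truncMom μ X (eta μ X j) / truncMom μ X (eta μ X n) ≤
          2 * Real.exp (((0.3:ℝ) ^ α - (0.5:ℝ) ^ α) * Real.log n ^ α)) ∧
    Tendsto (fun n : ℕ =>
        2 * Real.exp (((0.3:ℝ) ^ α - (0.5:ℝ) ^ α) * Real.log n ^ α))
      atTop (nhds 0) :=
  stmt15_general μ X hmeas α hα hasymp
end

section
/- Let W be a standard Wiener process and q ∈ Q with I(q,c) < ∞ for some c > 0. Then as n → ∞, n^{-1/2} sup_{1/n ≤ t ≤ 1} |W(⌊nt⌋) − W(nt)|/q(t) → 0 in probability. -/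
open MeasureTheory Filter Set ProbabilityTheory

/-!
For `t ∈ [1/n, 1]` put `k = ⌊nt⌋ ∈ {1, …, n}`; then `nt ∈ [k, k + 1]`, so the event is controlled
by the oscillation of `W` on `[k, k + 1]`. Ottaviani's maximal inequality on dyadic grids, plus path
continuity, bounds the probability that this oscillation exceeds `a ≥ 4` by `4 exp (-a² / 8)`.
Finiteness of `I(q, c)` and monotonicity of `q` near `0` force `q(t)² / t → ∞` as `t ↓ 0`, hence
`q(t)² ≥ min (X k / n) m` for an arbitrarily large `X` and some `m > 0`. With `a = ε √n q(t)` the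
union bound over `k` is at most `8 exp (-ε² X / 8) + 4 n exp (-ε² m / 8) ^ n`.
-/

open Real Finset
open scoped NNReal Topology

lemma exp_neg_le_quarter {x : ℝ} (hx : 2 ≤ x) : exp (-x) ≤ 1 / 4 := by
  have h2 : 4 ≤ exp 2 := by nlinarith [quadratic_le_exp_of_nonneg (x := 2) (by norm_num)]
  calc exp (-x) ≤ exp (-2) := exp_le_exp.2 (by linarith)
    _ = (exp 2)⁻¹ := exp_neg 2
    _ ≤ 1 / 4 := by rw [one_div]; exact inv_anti₀ (by norm_num) h2

lemma sum_exp_neg_min_le {A B : ℝ} (hA : 16 ≤ A) (n : ℕ) :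
    ∑ k ∈ Icc 1 n, exp (-min (A * k) (B * n) / 8) ≤ 2 * exp (-A / 8) + n * exp (-B / 8) ^ n := by
  set r := exp (-A / 8)
  have hr : r ≤ 1 / 4 := by simpa [r, neg_div] using exp_neg_le_quarter (x := A / 8) (by linarith)
  have hterm : ∀ k : ℕ, exp (-min (A * k) (B * n) / 8) ≤ r ^ k + exp (-B / 8) ^ n := fun k => by
    rw [← exp_nat_mul, ← exp_nat_mul]
    rcases min_choice (A * k) (B * n) with h | h
    · rw [h, show -(A * k) / 8 = k * (-A / 8) by ring]
      linarith [exp_pos (n * (-B / 8))]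
    · rw [h, show -(B * n) / 8 = n * (-B / 8) by ring]
      linarith [exp_pos (k * (-A / 8))]
  have hgeom : ∑ k ∈ Icc 1 n, r ^ k ≤ 2 * r := by
    have h := geom_sum_Ico_le_of_lt_one (m := 1) (n := n + 1) (exp_pos _).le (by linarith)
    rw [Finset.Ico_add_one_right_eq_Icc, pow_one] at h
    refine h.trans ?_
    rw [div_le_iff₀ (by linarith)]
    nlinarith [exp_pos (-A / 8)]
  calc ∑ k ∈ Icc 1 n, exp (-min (A * k) (B * n) / 8)
      ≤ ∑ k ∈ Icc 1 n, (r ^ k + exp (-B / 8) ^ n) := sum_le_sum fun k _ => hterm k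
    _ ≤ 2 * r + n * exp (-B / 8) ^ n := by
        rw [sum_add_distrib, sum_const, Nat.card_Icc, Nat.add_sub_cancel, nsmul_eq_mul]
        linarith

lemma lt_rpow_neg_half_mul_div_iff {ε x y z : ℝ} (hx : 0 < x) (hz : 0 < z) :
    ε < x ^ (-(1 / 2 : ℝ)) * (y / z) ↔ ε * √x * z < y := by
  rw [rpow_neg hx.le, ← sqrt_eq_rpow, inv_mul_eq_div, lt_div_iff₀ (sqrt_pos.2 hx),
    lt_div_iff₀ hz]

lemma Continuous.exists_dyadic_lt_abs_sub {f : ℝ → ℝ} (hf : Continuous f) {u s a : ℝ}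
    (hs : s ∈ Icc u (u + 1)) (h : a < |f s - f u|) :
    ∃ p j : ℕ, j ≤ 2 ^ p ∧ a < |f (u + j / 2 ^ p) - f u| := by
  have hsu : 0 ≤ s - u := by linarith [hs.1]
  have hx : Tendsto (fun p : ℕ => u + ⌊(s - u) * 2 ^ p⌋₊ / (2 : ℝ) ^ p) atTop (𝓝 s) := by
    have h := (tendsto_nat_floor_mul_div_atTop hsu).comp
      (tendsto_pow_atTop_atTop_of_one_lt (one_lt_two (α := ℝ)))
    simpa using h.const_add u
  have hfx := ((hf.tendsto s).comp hx).sub_const (f u) |>.abs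
  obtain ⟨p, hp⟩ := (hfx.eventually (lt_mem_nhds h)).exists
  refine ⟨p, ⌊(s - u) * 2 ^ p⌋₊, Nat.floor_le_of_le ?_, hp⟩
  push_cast
  nlinarith [hs.2, pow_pos (two_pos (α := ℝ)) p]

section GaussianTail

variable {Ω : Type*} [MeasurableSpace Ω] {μ : Measure Ω}

lemma hasSubgaussianMGF_one_of_map_eq_gaussianReal {Y : Ω → ℝ} (hY : Measurable Y) {v : ℝ≥0}
    (hYv : μ.map Y = gaussianReal 0 v) (hv : v ≤ 1) : HasSubgaussianMGF Y 1 μ := by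
  refine (HasSubgaussianMGF.id_map_iff hY.aemeasurable).1 ⟨fun t => ?_, fun t => ?_⟩
  · rw [hYv]
    exact integrable_exp_mul_gaussianReal t
  · rw [hYv, mgf_id_gaussianReal]
    have hv' : (v : ℝ) ≤ 1 := hv
    simp only [zero_mul, zero_add, NNReal.coe_one, one_mul]
    gcongr
    nlinarith [sq_nonneg t]

lemma ProbabilityTheory.HasSubgaussianMGF.measure_abs_gt_le [IsFiniteMeasure μ] {X : Ω → ℝ}
    {c : ℝ≥0} (hX : HasSubgaussianMGF X c μ) {b : ℝ} (hb : 0 ≤ b) :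
    μ {ω | b < |X ω|} ≤ ENNReal.ofReal (2 * exp (-b ^ 2 / (2 * c))) := by
  have hsplit : {ω | b < |X ω|} ⊆ {ω | b ≤ X ω} ∪ {ω | b ≤ (-X) ω} :=
    fun ω hω => (lt_abs.1 hω).imp le_of_lt fun h => (le_of_lt h : b ≤ -X ω)
  calc μ {ω | b < |X ω|} ≤ μ {ω | b ≤ X ω} + μ {ω | b ≤ (-X) ω} :=
        (measure_mono hsplit).trans (measure_union_le _ _)
    _ = ENNReal.ofReal (μ.real {ω | b ≤ X ω} + μ.real {ω | b ≤ (-X) ω}) := by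
        rw [ENNReal.ofReal_add measureReal_nonneg measureReal_nonneg, ofReal_measureReal,
          ofReal_measureReal]
    _ ≤ ENNReal.ofReal (2 * exp (-b ^ 2 / (2 * c))) := by
        gcongr
        linarith [hX.measure_ge_le hb, hX.neg.measure_ge_le hb]

end GaussianTail

section Ottaviani

variable {Ω : Type*} {Y : ℕ → Ω → ℝ} {M : ℕ}

lemma measurable_sum_iSup_comap {S : Set (Fin M)} {s : Finset ℕ}
    (hs : ∀ i ∈ s, ∃ h : i < M, (⟨i, h⟩ : Fin M) ∈ S) :
    Measurable[⨆ k ∈ S, MeasurableSpace.comap (Y k) inferInstance]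
      (fun ω => ∑ i ∈ s, Y i ω) := by
  refine Finset.measurable_sum s fun i hi => ?_
  obtain ⟨h, hS⟩ := hs i hi
  exact (comap_measurable (Y i)).mono
    (le_iSup₂ (f := fun (k : Fin M) (_ : k ∈ S) => MeasurableSpace.comap (Y k) inferInstance)
      ⟨i, h⟩ hS) le_rfl

variable [MeasurableSpace Ω] {μ : Measure Ω}

lemma indepSet_disjointed_abs_partialSum_gt (hY : ∀ i, Measurable (Y i))
    (hind : iIndepFun (fun i : Fin M => Y i) μ) (a b : ℝ) {j : ℕ} (hj : j ≤ M) :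
    IndepSet (disjointed (fun l => {ω | a < |∑ i ∈ range l, Y i ω|}) j)
      {ω | |∑ i ∈ Ico j M, Y i ω| ≤ b} μ := by
  have hindep := indep_iSup_of_disjoint
    (m := fun k : Fin M => MeasurableSpace.comap (Y k) inferInstance) (fun k => (hY k).comap_le)
    ((iIndepFun_iff_iIndep (fun _ => inferInstance) (fun k : Fin M => Y k) μ).1 hind)
    (S := {k | (k : ℕ) < j}) (T := {k | j ≤ (k : ℕ)})
    (Set.disjoint_left.2 fun _ (h₁ : _ < j) h₂ => (not_le.2 h₁) h₂)
  have hpast : ∀ l ≤ j, MeasurableSet[⨆ k ∈ {k : Fin M | (k : ℕ) < j},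
      MeasurableSpace.comap (Y k) inferInstance] {ω | a < |∑ i ∈ range l, Y i ω|} := fun l hl =>
    measurable_sum_iSup_comap (fun i hi => ⟨by simp at hi; omega, by simp at hi ⊢; omega⟩)
      (measurableSet_lt measurable_const measurable_abs)
  refine hindep.indepSet_of_measurableSet ?_ ?_
  · rw [disjointed_eq_inter_compl]
    exact (hpast j le_rfl).inter (MeasurableSet.iInter fun i =>
      MeasurableSet.iInter fun hi => (hpast i hi.le).compl)
  · exact measurable_sum_iSup_comap (fun i hi => ⟨by simp at hi; omega, by simp at hi ⊢; omega⟩)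
      (measurableSet_le measurable_abs measurable_const)

/-- Ottaviani's maximal inequality. -/
theorem measure_exists_abs_partialSum_gt_le [IsProbabilityMeasure μ]
    (hY : ∀ i, Measurable (Y i)) (hind : iIndepFun (fun i : Fin M => Y i) μ) {a : ℝ}
    (htail : ∀ j ≤ M, μ {ω | a / 2 < |∑ i ∈ Ico j M, Y i ω|} ≤ 2⁻¹) :
    μ {ω | ∃ j ≤ M, a < |∑ i ∈ range j, Y i ω|} ≤
      2 * μ {ω | a / 2 < |∑ i ∈ range M, Y i ω|} := by
  -- With `S j = ∑ i ∈ range j, Y i`, `T j` says that `j` is the first index with `a < |S j|`. It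
  -- depends only on `Y i` for `i < j`, hence is independent of `C j`, and on `T j ∩ C j` we still
  -- have `a / 2 < |S M|`.
  set T := disjointed fun j => {ω | a < |∑ i ∈ range j, Y i ω|}
  set C : ℕ → Set Ω := fun j => {ω | |∑ i ∈ Ico j M, Y i ω| ≤ a / 2}
  have hS : ∀ s : Finset ℕ, Measurable fun ω => ∑ i ∈ s, Y i ω :=
    fun s => Finset.measurable_sum s fun i _ => hY i
  have hTmeas : ∀ j, MeasurableSet (T j) :=
    MeasurableSet.disjointed fun i => measurableSet_lt measurable_const (hS _).abs
  have hCmeas : ∀ j, MeasurableSet (C j) := fun j => measurableSet_le (hS _).abs measurable_const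
  have hunion : {ω | ∃ j ≤ M, a < |∑ i ∈ range j, Y i ω|} = ⋃ j ∈ range (M + 1), T j := by
    rw [biUnion_range_succ_disjointed, partialSups_eq_biUnion_range]
    ext ω
    simp
  have hC : ∀ j ≤ M, 2⁻¹ ≤ μ (C j) := fun j hj => by
    have hCc : (C j)ᶜ = {ω | a / 2 < |∑ i ∈ Ico j M, Y i ω|} := by ext; simp [C]
    have h := prob_compl_eq_one_sub (μ := μ) (hCmeas j).compl
    rw [compl_compl, hCc] at h
    rw [h, ← ENNReal.one_sub_inv_two]
    exact tsub_le_tsub_left (htail j hj) 1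
  have hTC : ∀ j ≤ M, T j ∩ C j ⊆ {ω | a / 2 < |∑ i ∈ range M, Y i ω|} := by
    rintro j hj ω ⟨hT, hC⟩
    have hsum := sum_range_add_sum_Ico (fun i => Y i ω) hj
    have h := abs_sub_abs_le_abs_sub (∑ i ∈ range j, Y i ω) (-∑ i ∈ Ico j M, Y i ω)
    rw [abs_neg, sub_neg_eq_add, hsum] at h
    have hTj : a < |∑ i ∈ range j, Y i ω| := disjointed_subset _ j hT
    simp only [C, Set.mem_ofPred_eq] at hC ⊢
    linarith
  have hdisj : Set.PairwiseDisjoint ↑(range (M + 1)) fun j => T j ∩ C j :=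
    fun i _ j _ hij => (disjoint_disjointed _ hij).mono inter_subset_left inter_subset_left
  calc μ {ω | ∃ j ≤ M, a < |∑ i ∈ range j, Y i ω|}
      ≤ ∑ j ∈ range (M + 1), μ (T j) := hunion ▸ measure_biUnion_finset_le _ _
    _ ≤ ∑ j ∈ range (M + 1), 2 * μ (T j ∩ C j) := by
        refine sum_le_sum fun j hj => ?_
        have hj : j ≤ M := Nat.lt_succ_iff.1 (mem_range.1 hj)
        rw [(indepSet_disjointed_abs_partialSum_gt hY hind a (a / 2) hj).measure_inter_eq_mul,
          mul_left_comm]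
        calc μ (T j) = μ (T j) * (2 * 2⁻¹) := by
              rw [ENNReal.mul_inv_cancel two_ne_zero ENNReal.ofNat_ne_top, mul_one]
          _ ≤ μ (T j) * (2 * μ (C j)) := by gcongr; exact hC j hj
    _ = 2 * μ (⋃ j ∈ range (M + 1), T j ∩ C j) := by
        rw [← mul_sum, measure_biUnion_finset hdisj fun j _ => (hTmeas j).inter (hCmeas j)]
    _ ≤ 2 * μ {ω | a / 2 < |∑ i ∈ range M, Y i ω|} := by
        gcongr
        exact iUnion₂_subset fun j hj => hTC j (Nat.lt_succ_iff.1 (mem_range.1 hj))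

end Ottaviani

namespace MemQ

variable {q : ℝ → ℝ} {c : ℝ}

lemma exp_le_two_mul_integral (hq : MemQ q) (hc : 0 ≤ c) (hI : IFin q c) {δ : ℝ}
    (hmono : MonotoneOn q (Ioc 0 δ)) {t : ℝ} (ht : 0 < t) (htδ : t ≤ δ) (ht1 : t ≤ 1) :
    exp (-(2 * c) * (q t ^ 2 / t)) ≤ 2 * ∫ s in (0)..t, s⁻¹ * exp (-c * q s ^ 2 / s) := by
  set f : ℝ → ℝ := fun s => s⁻¹ * exp (-c * q s ^ 2 / s)
  have hfint : IntegrableOn f (Ioc 0 t) := hI.mono_set (Ioc_subset_Ioc_right ht1)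
  have hpt : ∀ s ∈ Ioc (t / 2) t, t⁻¹ * exp (-(2 * c) * (q t ^ 2 / t)) ≤ f s := by
    rintro s ⟨hs, hst⟩
    have hs0 : 0 < s := by linarith
    have hqs : 0 < q s := hq.1 s ⟨hs0, by linarith⟩
    have hqst : q s ≤ q t := hmono ⟨hs0, by linarith⟩ ⟨ht, htδ⟩ hst
    have hdiv : q s ^ 2 / s ≤ 2 * (q t ^ 2 / t) := by
      calc q s ^ 2 / s ≤ q t ^ 2 / (t / 2) :=
            div_le_div₀ (sq_nonneg _) (pow_le_pow_left₀ hqs.le hqst 2) (by positivity) hs.le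
        _ = 2 * (q t ^ 2 / t) := by field_simp
    refine mul_le_mul (inv_anti₀ hs0 hst) (exp_le_exp.2 ?_) (exp_pos _).le (inv_pos.2 hs0).le
    rw [mul_div_assoc]
    nlinarith
  calc exp (-(2 * c) * (q t ^ 2 / t))
      = 2 * ∫ _ in Ioc (t / 2) t, t⁻¹ * exp (-(2 * c) * (q t ^ 2 / t)) := by
        rw [setIntegral_const, volume_real_Ioc_of_le (by linarith), smul_eq_mul]
        field_simp
        ring
    _ ≤ 2 * ∫ s in Ioc (t / 2) t, f s := by
        refine mul_le_mul_of_nonneg_left ?_ two_pos.le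
        exact setIntegral_mono_on (integrableOn_const (by simp))
          (hfint.mono_set (Set.Ioc_subset_Ioc_left (by linarith))) measurableSet_Ioc hpt
    _ ≤ 2 * ∫ s in (0)..t, f s := by
        rw [intervalIntegral.integral_of_le ht.le]
        refine mul_le_mul_of_nonneg_left ?_ two_pos.le
        refine setIntegral_mono_set hfint ?_ (Set.Ioc_subset_Ioc_left (by linarith)).eventuallyLE
        filter_upwards [ae_restrict_mem measurableSet_Ioc] with s hs
        exact mul_nonneg (inv_nonneg.2 hs.1.le) (exp_pos _).le

lemma tendsto_sq_div_atTop (hq : MemQ q) (hc : 0 < c) (hI : IFin q c) :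
    Tendsto (fun t => q t ^ 2 / t) (𝓝[>] 0) atTop := by
  obtain ⟨δ, hδ, hmono⟩ := hq.2.2
  have hF : Tendsto (fun t => ∫ s in (0)..t, s⁻¹ * exp (-c * q s ^ 2 / s)) (𝓝[>] 0) (𝓝 0) := by
    have h := intervalIntegral.continuousWithinAt_primitive (a := 0) (b₀ := 0) (b₁ := 0)
      (b₂ := 1) (measure_singleton 0) (by
        rw [min_self, max_eq_right zero_le_one]
        exact (intervalIntegrable_iff_integrableOn_Ioc_of_le zero_le_one).2 hI)
    simpa using (h.mono_of_mem_nhdsWithin (Icc_mem_nhdsGT zero_lt_one)).tendsto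
  have hexp : Tendsto (fun t => exp (-(2 * c) * (q t ^ 2 / t))) (𝓝[>] 0) (𝓝 0) := by
    have hF2 := hF.const_mul 2
    rw [mul_zero] at hF2
    refine tendsto_of_tendsto_of_tendsto_of_le_of_le' tendsto_const_nhds hF2
      (Eventually.of_forall fun _ => (exp_pos _).le) ?_
    filter_upwards [Ioo_mem_nhdsGT (lt_min hδ one_pos)] with t ht
    exact hq.exp_le_two_mul_integral hc.le hI hmono ht.1 (ht.2.le.trans (min_le_left _ _))
      (ht.2.le.trans (min_le_right _ _))
  exact (tendsto_const_mul_atBot_of_neg (by linarith)).1 (tendsto_exp_comp_nhds_zero.1 hexp)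

lemma exists_min_le_sq (hq : MemQ q) (hc : 0 < c) (hI : IFin q c) (X : ℝ) :
    ∃ m > 0, ∀ s t, 0 < s → s ≤ t → t ≤ 1 → min (X * s) m ≤ q t ^ 2 := by
  obtain ⟨δ₀, hδ₀, hmono⟩ := hq.2.2
  obtain ⟨δ₁, hδ₁ : 0 < δ₁, hX⟩ := mem_nhdsGT_iff_exists_Ioo_subset.1
    ((hq.tendsto_sq_div_atTop hc hI).eventually_ge_atTop X)
  set δ := min (min δ₀ (δ₁ / 2)) (1 / 2)
  have hδ : 0 < δ := lt_min (lt_min hδ₀ (by linarith)) (by norm_num)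
  have hδ₀' : δ ≤ δ₀ := (min_le_left _ _).trans (min_le_left _ _)
  have hδ₁' : δ < δ₁ := ((min_le_left _ _).trans (min_le_right _ _)).trans_lt (by linarith)
  have hδ1 : δ < 1 := (min_le_right _ _).trans_lt (by norm_num)
  have hinf := hq.2.1 δ ⟨hδ, hδ1⟩
  refine ⟨sInf (q '' Icc δ 1) ^ 2, pow_pos hinf 2, fun s t hs hst ht => ?_⟩
  rcases le_or_gt t δ with htδ | htδ
  · have hqs : 0 < q s := hq.1 s ⟨hs, by linarith⟩
    have hXs : X * s ≤ q s ^ 2 := (le_div_iff₀ hs).1 (hX ⟨hs, by linarith⟩)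
    have hqst : q s ≤ q t := hmono ⟨hs, by linarith⟩ ⟨by linarith, by linarith⟩ hst
    exact (min_le_left _ _).trans (hXs.trans (pow_le_pow_left₀ hqs.le hqst 2))
  · have hbdd : BddBelow (q '' Icc δ 1) :=
      ⟨0, by rintro _ ⟨x, hx, rfl⟩; exact (hq.1 x ⟨by linarith [hx.1], hx.2⟩).le⟩
    exact (min_le_right _ _).trans
      (pow_le_pow_left₀ hinf.le (csInf_le hbdd ⟨t, ⟨htδ.le, ht⟩, rfl⟩) 2)

end MemQ

lemma min_mul_floor_le_sq {q : ℝ → ℝ} {X m : ℝ}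
    (hqm : ∀ s t, 0 < s → s ≤ t → t ≤ 1 → min (X * s) m ≤ q t ^ 2) (ε : ℝ) {n : ℕ} (hn : 0 < n)
    {t : ℝ} (ht : t ∈ Icc (n : ℝ)⁻¹ 1) :
    min (ε ^ 2 * X * ⌊n * t⌋₊) (ε ^ 2 * m * n) ≤ (ε * √n * q t) ^ 2 := by
  have hn' : (0 : ℝ) < n := Nat.cast_pos.2 hn
  have hk : (1 : ℝ) ≤ ⌊n * t⌋₊ := by
    refine mod_cast Nat.le_floor ?_
    simpa [hn'.ne'] using mul_le_mul_of_nonneg_left ht.1 hn'.le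
  have ht0 : 0 ≤ t := (inv_pos.2 hn').le.trans ht.1
  have hkt : (⌊n * t⌋₊ : ℝ) / n ≤ t :=
    (div_le_iff₀ hn').2 (mul_comm t n ▸ Nat.floor_le (by positivity))
  calc min (ε ^ 2 * X * ⌊n * t⌋₊) (ε ^ 2 * m * n)
      = ε ^ 2 * n * min (X * (⌊n * t⌋₊ / n)) m := by
        rw [mul_min_of_nonneg _ _ (by positivity)]
        congr 1 <;> field_simp
    _ ≤ ε ^ 2 * n * q t ^ 2 := by
        gcongr
        exact hqm _ t (div_pos (by linarith) hn') hkt ht.2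
    _ = (ε * √n * q t) ^ 2 := by rw [mul_pow, mul_pow, sq_sqrt hn'.le]

namespace IsStandardBM

variable {Ω : Type*} [MeasurableSpace Ω] {μ : Measure Ω} {W : ℝ → Ω → ℝ}

lemma hasSubgaussianMGF_sub (hW : IsStandardBM μ W) {s t : ℝ} (hs : 0 ≤ s) (hst : s ≤ t)
    (ht : t ≤ s + 1) : HasSubgaussianMGF (fun ω => W t ω - W s ω) 1 μ :=
  hasSubgaussianMGF_one_of_map_eq_gaussianReal ((hW.meas t).sub (hW.meas s))
    (hW.gauss s t hs hst) (by rw [← NNReal.coe_le_coe]; simp; linarith)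

lemma iIndepFun_increments (hW : IsStandardBM μ W) {t : ℕ → ℝ} (ht : Monotone t)
    (ht0 : ∀ i, 0 ≤ t i) (M : ℕ) :
    iIndepFun (fun (i : Fin M) ω => W (t (i + 1)) ω - W (t i) ω) μ := by
  simpa using hW.indep M (fun i => t i) (fun i j h => ht h) (fun i => ht0 i)

variable [IsProbabilityMeasure μ]

lemma measure_exists_grid_gt_le (hW : IsStandardBM μ W) {u : ℝ} (hu : 0 ≤ u) (M : ℕ)
    {a : ℝ} (ha : 4 ≤ a) :
    μ {ω | ∃ j ≤ M, a < |W (u + j / M) ω - W u ω|} ≤ ENNReal.ofReal (4 * exp (-a ^ 2 / 8)) := by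
  set t : ℕ → ℝ := fun i => u + i / M
  have ht : Monotone t := fun i j h => by simp only [t]; gcongr
  have ht0 : ∀ i, 0 ≤ t i := fun i => by positivity
  have htM : ∀ j ≤ M, t M ≤ t j + 1 := fun j hj => by
    simp only [t]
    linarith [div_self_le_one (M : ℝ),
      div_nonneg (Nat.cast_nonneg (α := ℝ) j) (Nat.cast_nonneg (α := ℝ) M)]
  set Y : ℕ → Ω → ℝ := fun i ω => W (t (i + 1)) ω - W (t i) ω
  have hrange : ∀ j ω, ∑ i ∈ range j, Y i ω = W (t j) ω - W u ω := fun j ω => by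
    simp only [Y, sum_range_sub (fun i => W (t i) ω), t, CharP.cast_eq_zero, zero_div, add_zero]
  have hIco : ∀ j ≤ M, ∀ ω, ∑ i ∈ Ico j M, Y i ω = W (t M) ω - W (t j) ω := fun j hj ω => by
    rw [sum_Ico_eq_sub _ hj, hrange, hrange, sub_sub_sub_cancel_right]
  have htail : ∀ j ≤ M, ∀ b, 0 ≤ b →
      μ {ω | b < |W (t M) ω - W (t j) ω|} ≤ ENNReal.ofReal (2 * exp (-b ^ 2 / 2)) := by
    intro j hj b hb
    simpa using (hW.hasSubgaussianMGF_sub (ht0 j) (ht hj) (htM j hj)).measure_abs_gt_le hb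
  have hexp : -(a / 2) ^ 2 / 2 = -a ^ 2 / 8 := by ring
  have hhalf : ∀ j ≤ M, μ {ω | a / 2 < |∑ i ∈ Ico j M, Y i ω|} ≤ 2⁻¹ := by
    intro j hj
    simp only [hIco j hj]
    refine (htail j hj _ (by linarith)).trans ?_
    rw [hexp, ← ENNReal.ofReal_ofNat 2, ← ENNReal.ofReal_inv_of_pos two_pos]
    gcongr
    linarith [neg_div 8 (a ^ 2) ▸ exp_neg_le_quarter (x := a ^ 2 / 8) (by nlinarith)]
  calc μ {ω | ∃ j ≤ M, a < |W (u + j / M) ω - W u ω|}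
      = μ {ω | ∃ j ≤ M, a < |∑ i ∈ range j, Y i ω|} := by simp only [hrange, t]
    _ ≤ 2 * μ {ω | a / 2 < |∑ i ∈ range M, Y i ω|} :=
        measure_exists_abs_partialSum_gt_le (fun i => (hW.meas _).sub (hW.meas _))
          (hW.iIndepFun_increments ht ht0 M) hhalf
    _ ≤ 2 * ENNReal.ofReal (2 * exp (-a ^ 2 / 8)) := by
        gcongr
        simpa [hrange, t, hexp] using htail 0 M.zero_le (a / 2) (by linarith)
    _ = ENNReal.ofReal (4 * exp (-a ^ 2 / 8)) := by
        rw [← ENNReal.ofReal_ofNat 2, ← ENNReal.ofReal_mul zero_le_two]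
        ring_nf

lemma measure_exists_Icc_gt_le (hW : IsStandardBM μ W) {u : ℝ} (hu : 0 ≤ u) {a : ℝ}
    (ha : 4 ≤ a) :
    μ {ω | ∃ s ∈ Icc u (u + 1), a < |W s ω - W u ω|} ≤ ENNReal.ofReal (4 * exp (-a ^ 2 / 8)) := by
  set A : ℕ → Set Ω := fun p => {ω | ∃ j : ℕ, j ≤ 2 ^ p ∧ a < |W (u + j / 2 ^ p) ω - W u ω|}
  have hA : Monotone A := monotone_nat_of_le_succ fun p ω ⟨j, hj, h⟩ =>
    ⟨2 * j, by rw [pow_succ]; omega, by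
      rwa [Nat.cast_mul, pow_succ, Nat.cast_ofNat, mul_comm _ (2 : ℝ),
        mul_div_mul_left _ _ two_ne_zero]⟩
  have hsub : {ω | ∃ s ∈ Icc u (u + 1), a < |W s ω - W u ω|} ⊆
      {ω | ¬ Continuous fun s => W s ω} ∪ ⋃ p, A p := fun ω ⟨s, hs, h⟩ => by
    by_cases hc : Continuous fun s => W s ω
    · exact Or.inr (mem_iUnion.2 (hc.exists_dyadic_lt_abs_sub hs h))
    · exact Or.inl hc
  calc μ {ω | ∃ s ∈ Icc u (u + 1), a < |W s ω - W u ω|}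
      ≤ μ {ω | ¬ Continuous fun s => W s ω} + μ (⋃ p, A p) :=
        (measure_mono hsub).trans (measure_union_le _ _)
    _ = ⨆ p, μ (A p) := by rw [ae_iff.1 hW.cont, zero_add, hA.measure_iUnion]
    _ ≤ ENNReal.ofReal (4 * exp (-a ^ 2 / 8)) :=
        iSup_le fun p => by simpa using hW.measure_exists_grid_gt_le hu (2 ^ p) ha

lemma measure_exists_floor_gt_le (hW : IsStandardBM μ W) {n : ℕ} (hn : 0 < n) {g : ℝ → ℝ}
    {b : ℕ → ℝ} (hb : ∀ k ∈ Finset.Icc 1 n, 4 ≤ b k)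
    (hbg : ∀ t ∈ Icc (n : ℝ)⁻¹ 1, b ⌊n * t⌋₊ ≤ g t) :
    μ {ω | ∃ t ∈ Icc (n : ℝ)⁻¹ 1, g t < |W ⌊n * t⌋₊ ω - W (n * t) ω|} ≤
      ∑ k ∈ Icc 1 n, ENNReal.ofReal (4 * exp (-b k ^ 2 / 8)) := by
  have hfloor : ∀ t ∈ Icc (n : ℝ)⁻¹ 1,
      ⌊n * t⌋₊ ∈ Finset.Icc 1 n ∧ n * t ∈ Icc (⌊n * t⌋₊ : ℝ) (⌊n * t⌋₊ + 1) := by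
    rintro t ⟨ht₁, ht₂⟩
    have hn' : (0 : ℝ) < n := Nat.cast_pos.2 hn
    have hnt : 1 ≤ n * t := by
      simpa [hn'.ne'] using mul_le_mul_of_nonneg_left ht₁ hn'.le
    refine ⟨mem_Icc.2 ⟨Nat.le_floor (by simpa using hnt),
      Nat.floor_le_of_le (by nlinarith)⟩, Nat.floor_le (by linarith), (Nat.lt_floor_add_one _).le⟩
  have hsub : {ω | ∃ t ∈ Icc (n : ℝ)⁻¹ 1, g t < |W ⌊n * t⌋₊ ω - W (n * t) ω|} ⊆
      ⋃ k ∈ Finset.Icc 1 n, {ω | ∃ s ∈ Set.Icc (k : ℝ) (k + 1), b k < |W s ω - W k ω|} := by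
    rintro ω ⟨t, ht, h⟩
    exact mem_iUnion₂.2 ⟨_, (hfloor t ht).1, n * t, (hfloor t ht).2,
      (hbg t ht).trans_lt (abs_sub_comm (W _ ω) _ ▸ h)⟩
  refine (measure_mono hsub).trans ((measure_biUnion_finset_le _ _).trans
    (sum_le_sum fun k hk => ?_))
  exact hW.measure_exists_Icc_gt_le k.cast_nonneg (hb k hk)

lemma measure_exists_floor_gt_le_of_min_le_sq (hW : IsStandardBM μ W) {n : ℕ} (hn : 0 < n)
    {g : ℝ → ℝ} {A B : ℝ} (hA : 16 ≤ A) (hB : 16 ≤ B * n)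
    (hg : ∀ t ∈ Icc (n : ℝ)⁻¹ 1, 0 ≤ g t ∧ min (A * ⌊n * t⌋₊) (B * n) ≤ g t ^ 2) :
    μ {ω | ∃ t ∈ Icc (n : ℝ)⁻¹ 1, g t < |W ⌊n * t⌋₊ ω - W (n * t) ω|} ≤
      ENNReal.ofReal (4 * (2 * exp (-A / 8) + n * exp (-B / 8) ^ n)) := by
  have hmin : ∀ k ∈ Finset.Icc 1 n, 16 ≤ min (A * k) (B * n) := fun k hk =>
    le_min (by nlinarith [show (1 : ℝ) ≤ k from mod_cast (mem_Icc.1 hk).1]) hB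
  have hb : ∀ k ∈ Finset.Icc 1 n, 4 ≤ √(min (A * k) (B * n)) := fun k hk =>
    (Real.le_sqrt' (by norm_num)).2 (by linarith [hmin k hk])
  have hbg : ∀ t ∈ Icc (n : ℝ)⁻¹ 1, √(min (A * ⌊n * t⌋₊) (B * n)) ≤ g t := fun t ht =>
    (Real.sqrt_le_sqrt (hg t ht).2).trans_eq (Real.sqrt_sq (hg t ht).1)
  calc _ ≤ ∑ k ∈ Finset.Icc 1 n, ENNReal.ofReal (4 * exp (-√(min (A * k) (B * n)) ^ 2 / 8)) :=
        hW.measure_exists_floor_gt_le hn hb hbg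
    _ = ENNReal.ofReal (4 * ∑ k ∈ Finset.Icc 1 n, exp (-min (A * k) (B * n) / 8)) := by
        rw [mul_sum, ENNReal.ofReal_sum_of_nonneg fun k _ => by positivity]
        refine sum_congr rfl fun k hk => ?_
        rw [Real.sq_sqrt (by linarith [hmin k hk])]
    _ ≤ _ := by gcongr; exact sum_exp_neg_min_le hA n

lemma eventually_measure_le (hW : IsStandardBM μ W) {q : ℝ → ℝ} (hq : MemQ q) {c : ℝ}
    (hc : 0 < c) (hI : IFin q c) {ε : ℝ} (hε : 0 < ε) {A : ℝ} (hA : 16 ≤ A) :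
    ∃ r < 1, 0 ≤ r ∧ ∀ᶠ n : ℕ in atTop,
      μ {ω | ∃ t ∈ Icc (n : ℝ)⁻¹ 1,
        ε < (n : ℝ) ^ (-(1 / 2 : ℝ)) * (|W ⌊(n : ℝ) * t⌋₊ ω - W (n * t) ω| / q t)} ≤
      ENNReal.ofReal (4 * (2 * exp (-A / 8) + n * r ^ n)) := by
  obtain ⟨m, hm, hqm⟩ := hq.exists_min_le_sq hc hI (A / ε ^ 2)
  have hA' : ε ^ 2 * (A / ε ^ 2) = A := mul_div_cancel₀ _ (by positivity)
  refine ⟨exp (-(ε ^ 2 * m) / 8), exp_lt_one_iff.2 ?_, (exp_pos _).le, ?_⟩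
  · rw [neg_div, neg_lt_zero]
    positivity
  filter_upwards [eventually_gt_atTop 0, (tendsto_natCast_atTop_atTop.const_mul_atTop
    (by positivity : 0 < ε ^ 2 * m)).eventually_ge_atTop 16] with n hn hlarge
  have hqpos : ∀ t ∈ Icc (n : ℝ)⁻¹ 1, 0 < q t := fun t ht =>
    hq.1 t ⟨(inv_pos.2 (Nat.cast_pos.2 hn)).trans_le ht.1, ht.2⟩
  calc _ ≤ μ {ω | ∃ t ∈ Icc (n : ℝ)⁻¹ 1, ε * √n * q t < |W ⌊n * t⌋₊ ω - W (n * t) ω|} :=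
        measure_mono <| by
          rintro ω ⟨t, ht, h⟩
          exact ⟨t, ht, (lt_rpow_neg_half_mul_div_iff (Nat.cast_pos.2 hn) (hqpos t ht)).1 h⟩
    _ ≤ _ := hW.measure_exists_floor_gt_le_of_min_le_sq hn hA hlarge fun t ht =>
          ⟨by have := hqpos t ht; positivity, hA' ▸ min_mul_floor_le_sq hqm ε hn ht⟩

end IsStandardBM

/-- If `q ∈ Q` with `I(q,c) < ∞` for some `c > 0`, then
`n^{-1/2} sup_{1/n ≤ t ≤ 1} |W(⌊nt⌋) − W(nt)|/q(t) → 0` in probability. -/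
theorem stmt18 {Ω : Type*} [MeasurableSpace Ω] (μ : Measure Ω)
    [IsProbabilityMeasure μ] (W : ℝ → Ω → ℝ) (hW : IsStandardBM μ W)
    (q : ℝ → ℝ) (hq : MemQ q) (hI : ∃ c > (0:ℝ), IFin q c) :
    ∀ ε > (0:ℝ),
      Tendsto (fun n : ℕ =>
          μ {ω | ∃ t ∈ Set.Icc ((n:ℝ)⁻¹) 1,
            ε < ((n:ℝ)) ^ (-(1/2 : ℝ)) *
              (|W (↑(⌊(n:ℝ) * t⌋₊)) ω - W ((n:ℝ) * t) ω| / q t)})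
        atTop (nhds 0) := by
  intro ε hε
  obtain ⟨c, hc, hIc⟩ := hI
  rw [ENNReal.tendsto_nhds_zero]
  intro η hη
  obtain ⟨ρ, -, hρ, hρη⟩ := ENNReal.lt_iff_exists_real_btwn.1 hη
  have hρ : 0 < ρ := ENNReal.ofReal_pos.1 hρ
  have hexp : Tendsto (fun A => 8 * exp (-A / 8)) atTop (𝓝 0) := by
    simpa [neg_div] using (tendsto_exp_neg_atTop_nhds_zero.comp
      (tendsto_id.atTop_div_const (by norm_num : (0 : ℝ) < 8))).const_mul 8
  obtain ⟨A, hAρ, hA⟩ :=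
    ((hexp.eventually (gt_mem_nhds (half_pos hρ))).and (eventually_ge_atTop 16)).exists
  obtain ⟨r, hr1, hr0, hμ⟩ := hW.eventually_measure_le hq hc hIc hε hA
  have hdecay : Tendsto (fun n : ℕ => 4 * (n * r ^ n)) atTop (𝓝 0) := by
    simpa using (tendsto_self_mul_const_pow_of_abs_lt_one (abs_lt.2 ⟨by linarith, hr1⟩)).const_mul 4
  filter_upwards [hμ, hdecay.eventually (gt_mem_nhds (half_pos hρ))] with n hn hsmall
  exact hn.trans ((ENNReal.ofReal_le_ofReal (by linarith)).trans hρη.le)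
end
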